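/- Let 𝓗 be the Hilbert space of Dirichlet series f(s) = Σ_{n≥1} a_n n^{−s} with ‖f‖² = Σ_{n≥1} |a_n|² < ∞ (each such f defines a holomorphic function on the half-plane Re s > 1/2). Let φ : ℂ_{1/2} → ℂ_{1/2} be a map such that the composition operator C_φ(f) = f∘φ maps 𝓗 boundedly into itself; by the Gordon–Hedenmalm theorem such φ has the form φ(s) = c₀ s + ψ(s), where c₀ is a non-negative integer and ψ is a Dirichlet series. Then C_φ is not hypercyclic on 𝓗: no f ∈ 𝓗 has dense orbit {C_φⁿ f : n ≥ 1}. -/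

import Mathlib

/-!
If `c₀ ≥ 1`, then `Re φ(σ) → ∞` as `σ → +∞`; since every `f ∈ 𝓗` tends to its first coefficient
as `Re s → ∞`, `C_φ` preserves the first coefficient. If `c₀ = 0`, then `φ` is an absolutely
convergent Dirichlet series, hence almost periodic in the vertical direction, and a Rouché-type
argument shows that `φ` is not injective; if `φ s₁ = φ s₂` with `s₁ ≠ s₂`, the range of `C_φ` is
orthogonal to the nonzero vector `k_{s₁} - k_{s₂}` of reproducing kernels. In both cases a nonzero
functional `L` satisfies `L ∘ C_φ = c L` with `|c| ≤ 1`, so `L` is bounded on every orbit, which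
therefore cannot be dense.
-/

open Filter Topology Set

/-- The Hilbert space `𝓗` of square-summable Dirichlet series, realized as the `ℓ²` space
of their coefficient sequences (with `a_n` indexed so that `a n` is the coefficient of
`(n+1)^{-s}`). -/
noncomputable abbrev DirichletH : Type := lp (fun _ : ℕ => ℂ) 2

/-- The holomorphic function on the half-plane `Re s > 1/2` associated with an element of
`𝓗`: `f(s) = ∑_{n ≥ 1} a_n n^{-s}`. -/
noncomputable def dirichletFun (a : DirichletH) (s : ℂ) : ℂ :=
  ∑' n : ℕ, a n * ((n : ℂ) + 1) ^ (-s)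

theorem not_dense_range_pow_apply_of_apply_eq_mul {𝕜 E : Type*} [NontriviallyNormedField 𝕜]
    [AddCommGroup E] [TopologicalSpace E] [Module 𝕜 E] {T : E →L[𝕜] E} {L : E →L[𝕜] 𝕜}
    (hL : L ≠ 0) {c : 𝕜} (hc : ‖c‖ ≤ 1) (hLT : ∀ x, L (T x) = c * L x) (f : E) :
    ¬ Dense (range fun n : ℕ ↦ (T ^ (n + 1)) f) := by
  intro hdense
  have hpow (n : ℕ) : L ((T ^ n) f) = c ^ n * L f := by
    induction n with
    | zero => simp
    | succ n ih => rw [pow_succ', mul_apply_eq_comp, hLT, ih, pow_succ', mul_assoc]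
  have hclosed : IsClosed {x | ‖L x‖ ≤ ‖L f‖} := isClosed_le (by fun_prop) continuous_const
  have horbit : range (fun n : ℕ ↦ (T ^ (n + 1)) f) ⊆ {x | ‖L x‖ ≤ ‖L f‖} := by
    rintro _ ⟨n, rfl⟩
    rw [mem_ofPred_eq, hpow, norm_mul, norm_pow]
    exact mul_le_of_le_one_left (norm_nonneg _) (pow_le_one₀ (norm_nonneg _) hc)
  have hbounded : ∀ x, ‖L x‖ ≤ ‖L f‖ := fun x ↦
    hclosed.closure_subset_iff.mpr horbit (hdense.closure_eq.symm ▸ mem_univ x)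
  obtain ⟨x, hx⟩ : ∃ x, L x ≠ 0 := by
    by_contra! h
    exact hL (ContinuousLinearMap.ext h)
  obtain ⟨k, hk⟩ := NormedField.exists_lt_norm 𝕜 ‖L f‖
  have := hbounded ((k / L x) • x)
  rw [map_smul, smul_eq_mul, div_mul_cancel₀ k hx] at this
  exact this.not_gt hk

theorem exists_tendsto_pow_nhds_one {ι : Type*} [Countable ι] (w : ι → ℂ) (hw : ∀ i, ‖w i‖ = 1) :
    ∃ τ : ℕ → ℕ, (∀ j, 0 < τ j) ∧ ∀ i, Tendsto (fun j ↦ w i ^ τ j) atTop (𝓝 1) := by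
  have hcompact : IsCompact (univ.pi fun _ : ι ↦ Metric.sphere (0 : ℂ) 1) :=
    isCompact_univ_pi fun _ ↦ isCompact_sphere 0 1
  obtain ⟨v, hv, ψ, hψ, hlim⟩ := hcompact.tendsto_subseq (x := fun k i ↦ w i ^ k)
    fun k i _ ↦ by simp [hw]
  refine ⟨fun j ↦ ψ (j + 1) - ψ j, fun j ↦ Nat.sub_pos_of_lt (hψ j.lt_succ_self), fun i ↦ ?_⟩
  have hvi : v i ≠ 0 := ne_zero_of_mem_unit_sphere ⟨v i, hv i (mem_univ i)⟩
  have hwi : w i ≠ 0 := norm_ne_zero_iff.mp (by simp [hw])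
  have hconv : Tendsto (fun j ↦ w i ^ ψ j) atTop (𝓝 (v i)) := tendsto_pi_nhds.mp hlim i
  have := ((hconv.comp (tendsto_add_atTop_nat 1)).div hconv hvi)
  rw [div_self hvi] at this
  refine this.congr fun j ↦ ?_
  simp [pow_sub₀ _ hwi (hψ j.lt_succ_self).le, div_eq_mul_inv]

open Metric in
theorem AnalyticOnNhd.exists_mem_closedBall_eq_of_norm_sub_lt {F G : ℂ → ℂ} {U : Set ℂ}
    (hG : AnalyticOnNhd ℂ G U) (hU : IsPreconnected U) {p : ℂ} {r ρ : ℝ} (hr : 0 < r)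
    (hball : closedBall p r ⊆ U) (hF : ∀ z ∈ sphere p r, ρ ≤ ‖F z - F p‖)
    (hGF : ∀ z ∈ closedBall p r, ‖G z - F z‖ < ρ / 4) :
    ∃ z ∈ closedBall p r, G z = F p := by
  have hp : p ∈ closedBall p r := mem_closedBall_self hr.le
  have hG_sphere (z : ℂ) (hz : z ∈ sphere p r) : ρ / 2 ≤ ‖G z - G p‖ := by
    have h₁ := hGF z (sphere_subset_closedBall hz)
    have h₂ := hGF p hp
    have : ‖F z - F p‖ ≤ ‖G z - G p‖ + ‖G z - F z‖ + ‖G p - F p‖ := by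
      calc ‖F z - F p‖ = ‖(G z - G p) - (G z - F z) + (G p - F p)‖ := by ring_nf
        _ ≤ _ := (norm_add_le _ _).trans (by gcongr; exact norm_sub_le _ _)
    linarith [hF z hz]
  have hρ : 0 < ρ := by linarith [hGF p hp, norm_nonneg (G p - F p)]
  have hnonconst : ∃ᶠ z in 𝓝 p, G z ≠ G p := by
    intro hconst
    obtain ⟨z, hz⟩ := (NormedSpace.sphere_nonempty (x := p)).mpr hr.le
    have hGz : G z = G p := hG.eqOn_of_preconnected_of_eventuallyEq analyticOnNhd_const hU
      (hball hp) (hconst.mono fun _ ↦ not_not.mp) (hball (sphere_subset_closedBall hz))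
    linarith [hG_sphere z hz, show ‖G z - G p‖ = 0 by simp [hGz]]
  have hdiff : DiffContOnCl ℂ G (ball p r) :=
    (hG.differentiableOn.mono ((closure_ball p hr.ne').symm ▸ hball)).diffContOnCl
  obtain ⟨z, hz, hGz⟩ := hdiff.ball_subset_image_closedBall hr hG_sphere hnonconst
    (show F p ∈ ball (G p) (ρ / 2 / 2) by
      rw [mem_ball, dist_comm, dist_eq_norm]; linarith [hGF p hp])
  exact ⟨z, hz, hGz⟩

theorem Int.eq_zero_of_mul_log_eq_mul_log {p q : ℕ} [Fact p.Prime] (hq : q.Prime) (hpq : p ≠ q)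
    {k m : ℤ} (h : (k : ℝ) * Real.log p = m * Real.log q) : k = 0 := by
  have hp := (Fact.out : p.Prime)
  have hreal : (Rat.cast ((p : ℚ) ^ k) : ℝ) = Rat.cast ((q : ℚ) ^ m) := by
    have hp₀ : (0 : ℝ) < p := by exact_mod_cast hp.pos
    have hq₀ : (0 : ℝ) < q := by exact_mod_cast hq.pos
    push_cast
    rw [← Real.rpow_intCast, ← Real.rpow_intCast, Real.rpow_def_of_pos hp₀,
      Real.rpow_def_of_pos hq₀, mul_comm, h, mul_comm]
  have hval := congrArg (padicValRat p) (Rat.cast_injective hreal)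
  rw [padicValRat.zpow, padicValRat.zpow, padicValRat.self hp.one_lt, padicValRat.of_nat,
    padicValNat.eq_zero_of_not_dvd ((Nat.prime_dvd_prime_iff_eq hp hq).not.mpr hpq)] at hval
  simpa using hval

open Complex LSeries
open scoped ComplexConjugate

theorem Complex.lt_re_of_mem_closedBall {p z : ℂ} {x r : ℝ} (hrp : x + r < p.re)
    (hz : z ∈ Metric.closedBall p r) : x < z.re := by
  have := (abs_le.mp ((abs_re_le_norm (z - p)).trans (mem_closedBall_iff_norm.mp hz))).1
  rw [sub_re] at this
  linarith

theorem exists_int_of_natCast_cpow_neg_eq {c : ℕ} (hc : c ≠ 0) {s₁ s₂ : ℂ}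
    (h : (c : ℂ) ^ (-s₁) = (c : ℂ) ^ (-s₂)) :
    ∃ k : ℤ, (s₂ - s₁) * Real.log c = k * (2 * Real.pi * I) := by
  rw [cpow_def_of_ne_zero (by exact_mod_cast hc), cpow_def_of_ne_zero (by exact_mod_cast hc),
    exp_eq_exp_iff_exists_int] at h
  obtain ⟨k, hk⟩ := h
  exact ⟨k, by rw [natCast_log]; linear_combination hk⟩

theorem exists_natCast_add_one_cpow_neg_ne {s₁ s₂ : ℂ} (h : s₁ ≠ s₂) :
    ∃ n : ℕ, ((n : ℂ) + 1) ^ (-s₁) ≠ ((n : ℂ) + 1) ^ (-s₂) := by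
  -- `2 ^ (-s)` and `3 ^ (-s)` together determine `s`, because `log 3 / log 2` is irrational
  by_contra! hall
  obtain ⟨k, hk⟩ := exists_int_of_natCast_cpow_neg_eq (c := 2) two_ne_zero
    (by simpa [one_add_one_eq_two] using hall 1)
  obtain ⟨m, hm⟩ := exists_int_of_natCast_cpow_neg_eq (c := 3) three_ne_zero
    (by simpa [show (2 : ℂ) + 1 = 3 by norm_num] using hall 2)
  have hlog : (k : ℝ) * Real.log 3 = m * Real.log 2 := by
    have h2πI : (2 * Real.pi * I : ℂ) ≠ 0 := by simp [Real.pi_ne_zero]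
    refine ofReal_injective (mul_right_cancel₀ h2πI ?_)
    push_cast at hk hm ⊢
    linear_combination (Real.log 2 : ℂ) * hm - (Real.log 3 : ℂ) * hk
  have hk₀ := Int.eq_zero_of_mul_log_eq_mul_log (p := 3) Nat.prime_two (by norm_num)
    (by exact_mod_cast hlog)
  rw [hk₀, Int.cast_zero, zero_mul, mul_eq_zero] at hk
  exact hk.elim (fun h' ↦ h (sub_eq_zero.mp h').symm)
    fun h' ↦ (Real.log_pos one_lt_two).ne' (by exact_mod_cast h')

theorem norm_natCast_cpow_neg_I {n : ℕ} (hn : n ≠ 0) : ‖(n : ℂ) ^ (-I)‖ = 1 := by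
  simp [norm_natCast_cpow_of_pos (Nat.pos_of_ne_zero hn)]

theorem norm_natCast_cpow_neg_I_le (n : ℕ) : ‖(n : ℂ) ^ (-I)‖ ≤ 1 := by
  rcases eq_or_ne n 0 with rfl | hn
  · simp [zero_cpow (neg_ne_zero.mpr I_ne_zero)]
  · exact (norm_natCast_cpow_neg_I hn).le

theorem tsum_mul_natCast_add_one_cpow_neg (b : ℕ → ℂ) (s : ℂ) :
    ∑' n : ℕ, b n * ((n : ℂ) + 1) ^ (-s) = LSeries (fun n ↦ b (n - 1)) s := by
  rw [LSeries, ← Nat.succ_injective.tsum_eq (f := term (fun n ↦ b (n - 1)) s)]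
  · refine tsum_congr fun n ↦ ?_
    rw [term_of_ne_zero (Nat.succ_ne_zero n), cpow_neg, div_eq_mul_inv, Nat.succ_sub_one,
      Nat.cast_succ]
  · intro n hn
    cases n with
    | zero => exact absurd (term_zero _ _) hn
    | succ n => exact ⟨n, rfl⟩

theorem LSeries.tendsto_of_tendsto_re_atTop {f : ℕ → ℂ} (hf : abscissaOfAbsConv f < ⊤)
    {α : Type*} {l : Filter α} {w : α → ℂ} (hw : Tendsto (fun t ↦ (w t).re) l atTop) :
    Tendsto (fun t ↦ LSeries f (w t)) l (𝓝 (f 1)) := by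
  obtain ⟨x, hx, -⟩ := EReal.exists_between_coe_real hf
  have hsum : LSeriesSummable f x := LSeriesSummable_of_abscissaOfAbsConv_lt_re (by simpa using hx)
  have hterm (n : ℕ) : Tendsto (fun t ↦ term f (w t) n) l (𝓝 (if n = 1 then f 1 else 0)) := by
    rcases lt_trichotomy n 1 with hn | rfl | hn
    · simpa [Nat.lt_one_iff.mp hn] using tendsto_const_nhds
    · simpa using tendsto_const_nhds
    · rw [if_neg hn.ne', tendsto_zero_iff_norm_tendsto_zero]
      simp only [norm_term_eq, if_neg (by omega : n ≠ 0)]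
      exact ((tendsto_rpow_atTop_of_base_gt_one _ (by exact_mod_cast hn)).comp hw).const_div_atTop _
  have hbound : ∀ᶠ t in l, ∀ n, ‖term f (w t) n‖ ≤ ‖term f x n‖ := by
    filter_upwards [hw.eventually_ge_atTop x] with t ht n
    exact norm_term_le_of_re_le_re f (by simpa using ht) n
  have := tendsto_tsum_of_dominated_convergence hsum.norm hterm hbound
  rwa [tsum_ite_eq] at this

theorem LSeries.exists_tendsto_atTop (f : ℕ → ℂ) :
    ∃ C, Tendsto (fun x : ℝ ↦ LSeries f x) atTop (𝓝 C) := by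
  by_cases hf : abscissaOfAbsConv f = ⊤
  · exact ⟨0, by simp [LSeries_eq_zero_of_abscissaOfAbsConv_eq_top hf]⟩
  · exact ⟨f 1, LSeries.tendsto_atTop (lt_top_iff_ne_top.mpr hf)⟩

theorem tendsto_re_natCast_mul_add_LSeries_atTop {c : ℕ} (hc : c ≠ 0) (f : ℕ → ℂ) :
    Tendsto (fun x : ℝ ↦ ((c : ℂ) * x + LSeries f x).re) atTop atTop := by
  obtain ⟨C, hC⟩ := LSeries.exists_tendsto_atTop f
  simp only [add_re, ← ofReal_natCast, ← ofReal_mul, ofReal_re]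
  exact (tendsto_id.const_mul_atTop (Nat.cast_pos.mpr (Nat.pos_of_ne_zero hc))).atTop_add
    ((continuous_re.tendsto C).comp hC)

theorem LSeries.term_add_natCast_mul_I (f : ℕ → ℂ) (s : ℂ) (k n : ℕ) :
    term f (s + k * I) n = term f s n * ((n : ℂ) ^ (-I)) ^ k := by
  rcases eq_or_ne n 0 with rfl | hn
  · simp
  · rw [term_of_ne_zero hn, term_of_ne_zero hn, ← cpow_nat_mul, cpow_add _ _ (by exact_mod_cast hn),
      mul_neg, cpow_neg]
    field_simp

theorem LSeriesSummable.exists_norm_LSeries_add_mul_I_sub_le {f : ℕ → ℂ} {x : ℝ}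
    (hf : LSeriesSummable f x) {ε : ℝ} (hε : 0 < ε) :
    ∃ τ : ℕ, 0 < τ ∧ ∀ s : ℂ, x ≤ s.re → ‖LSeries f (s + τ * I) - LSeries f s‖ ≤ ε := by
  set η : ℕ → ℕ → ℝ := fun k n ↦ ‖term f x n‖ * ‖((n : ℂ) ^ (-I)) ^ k - 1‖
  have hη_le (k n : ℕ) : η k n ≤ 2 * ‖term f x n‖ := by
    have hpow : ‖((n : ℂ) ^ (-I)) ^ k‖ ≤ 1 := by
      rw [norm_pow]
      exact pow_le_one₀ (norm_nonneg _) (norm_natCast_cpow_neg_I_le n)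
    have : ‖((n : ℂ) ^ (-I)) ^ k - 1‖ ≤ 2 := by
      linarith [norm_sub_le (((n : ℂ) ^ (-I)) ^ k) 1, norm_one (α := ℂ)]
    simpa [η, mul_comm] using mul_le_mul_of_nonneg_left this (norm_nonneg (term f x n))
  obtain ⟨τ, hτ_pos, hτ⟩ := exists_tendsto_pow_nhds_one (fun n : {n : ℕ // n ≠ 0} ↦ (n : ℂ) ^ (-I))
    fun n ↦ norm_natCast_cpow_neg_I n.2
  have hη_tendsto : Tendsto (fun j ↦ ∑' n, η (τ j) n) atTop (𝓝 0) := by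
    rw [← tsum_zero]
    refine tendsto_tsum_of_dominated_convergence (hf.norm.mul_left 2) (fun n ↦ ?_)
      (Eventually.of_forall fun j n ↦
        (Real.norm_of_nonneg (by positivity)).trans_le (hη_le (τ j) n))
    rcases eq_or_ne n 0 with rfl | hn
    · simp [η]
    · simpa [η] using ((hτ ⟨n, hn⟩).sub_const 1).norm.const_mul ‖term f x n‖
  obtain ⟨j, hj⟩ := (hη_tendsto.eventually (eventually_le_nhds hε)).exists
  refine ⟨τ j, hτ_pos j, fun s hs ↦ ?_⟩
  have hsum : LSeriesSummable f s := hf.of_re_le_re (by simpa using hs)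
  have hsum' : LSeriesSummable f (s + τ j * I) := hf.of_re_le_re (by simpa using hs)
  calc ‖LSeries f (s + τ j * I) - LSeries f s‖
      = ‖∑' n, term f s n * (((n : ℂ) ^ (-I)) ^ τ j - 1)‖ := by
        rw [LSeries, LSeries, ← hsum'.tsum_sub hsum]
        simp only [term_add_natCast_mul_I, mul_sub, mul_one]
    _ ≤ ∑' n, η (τ j) n := by
        refine tsum_of_norm_bounded ((hf.norm.mul_left 2).of_nonneg_of_le (fun n ↦ by positivity)
          (hη_le _)).hasSum fun n ↦ ?_
        rw [norm_mul]
        exact mul_le_mul_of_nonneg_right (norm_term_le_of_re_le_re f (by simpa using hs) n)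
          (norm_nonneg _)
    _ ≤ ε := hj

theorem LSeriesSummable.analyticOnNhd_LSeries {f : ℕ → ℂ} {x : ℝ} (hf : LSeriesSummable f x) :
    AnalyticOnNhd ℂ (LSeries f) {s | x < s.re} :=
  (LSeries_analyticOnNhd f).mono fun s (hs : x < s.re) ↦
    hf.abscissaOfAbsConv_le.trans_lt (by simpa using hs)

open Metric in
theorem LSeriesSummable.exists_mem_closedBall_LSeries_add_mul_I_eq {f : ℕ → ℂ} {x : ℝ}
    (hf : LSeriesSummable f x) {p : ℂ} {r ρ : ℝ} (hr : 0 < r) (hrp : x + r < p.re) (hρ : 0 < ρ)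
    (hsphere : ∀ z ∈ sphere p r, ρ ≤ ‖LSeries f z - LSeries f p‖) :
    ∃ τ : ℕ, 0 < τ ∧ ∃ z ∈ closedBall p r, LSeries f (z + τ * I) = LSeries f p := by
  have hball (z : ℂ) (hz : z ∈ closedBall p r) : x < z.re := lt_re_of_mem_closedBall hrp hz
  obtain ⟨τ, hτ, hτ_le⟩ := hf.exists_norm_LSeries_add_mul_I_sub_le (ε := ρ / 8) (by positivity)
  have hshift : AnalyticOnNhd ℂ (fun s ↦ LSeries f (s + τ * I)) {s | x < s.re} :=
    hf.analyticOnNhd_LSeries.comp (analyticOnNhd_id.add analyticOnNhd_const) fun s hs ↦ by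
      simpa using hs
  exact ⟨τ, hτ, hshift.exists_mem_closedBall_eq_of_norm_sub_lt
    (convex_halfSpace_re_gt x).isPreconnected hr hball hsphere
    fun z hz ↦ (hτ_le z (hball z hz).le).trans_lt (by linarith)⟩

open Metric in
theorem LSeriesSummable.not_injOn_LSeries {f : ℕ → ℂ} {x : ℝ} (hf : LSeriesSummable f x) :
    ¬ InjOn (LSeries f) {s | x < s.re} := by
  intro hinj
  set p : ℂ := x + 1
  have hp : x < p.re := by simp [p]
  have hF := hf.analyticOnNhd_LSeries
  rcases (hF p hp).eventually_eq_or_eventually_ne analyticAt_const with hconst | hne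
  · obtain ⟨z, ⟨hFz, hz⟩, hzp⟩ := (((hconst.and ((isOpen_lt continuous_const continuous_re).mem_nhds
      hp)).filter_mono nhdsWithin_le_nhds).and (self_mem_nhdsWithin (s := {p}ᶜ))).exists
    exact hzp (hinj hz hp hFz)
  obtain ⟨ε, hε, hisolated⟩ := Metric.eventually_nhds_iff.mp (eventually_nhdsWithin_iff.mp hne)
  set r := min (ε / 2) (1 / 2)
  have hr : 0 < r := by positivity
  have hrp : x + r < p.re := by
    simp only [p, add_re, ofReal_re, one_re]
    linarith [min_le_right (ε / 2) (1 / 2)]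
  obtain ⟨z₀, hz₀, hmin⟩ := (isCompact_sphere p r).exists_isMinOn
    ((NormedSpace.sphere_nonempty (x := p)).mpr hr.le)
    ((hF.continuousOn.mono fun _ hz ↦ lt_re_of_mem_closedBall hrp (sphere_subset_closedBall hz)).sub
      continuousOn_const).norm
  have hρ : 0 < ‖LSeries f z₀ - LSeries f p‖ := by
    refine norm_pos_iff.mpr (sub_ne_zero.mpr (hisolated ?_ (ne_of_mem_sphere hz₀ hr.ne')))
    rw [mem_sphere.mp hz₀]
    linarith [min_le_left (ε / 2) (1 / 2)]
  obtain ⟨τ, hτ, z, hz, hFz⟩ := hf.exists_mem_closedBall_LSeries_add_mul_I_eq hr hrp hρ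
    fun z hz ↦ by simpa using hmin hz
  have hzτ : z + τ * I = p :=
    hinj (show x < (z + τ * I).re by simpa using lt_re_of_mem_closedBall hrp hz) hp hFz
  -- `z` lies within `1 / 2` of `p`, while `z + τ * I = p` with `τ ≥ 1`
  have him := (abs_im_le_norm (z - p)).trans (mem_closedBall_iff_norm.mp hz)
  rw [← hzτ] at him
  simp only [sub_add_cancel_left, neg_im, mul_im, natCast_re, I_im, natCast_im, I_re, mul_one,
    mul_zero, add_zero, abs_neg, Nat.abs_cast] at him
  have : (1 : ℝ) ≤ τ := by exact_mod_cast hτ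
  linarith [min_le_right (ε / 2) (1 / 2)]

theorem dirichletFun_eq_LSeries (a : DirichletH) : dirichletFun a = LSeries (fun n ↦ a (n - 1)) :=
  funext (tsum_mul_natCast_add_one_cpow_neg a)

theorem abscissaOfAbsConv_dirichletH_lt_top (a : DirichletH) :
    abscissaOfAbsConv (fun n ↦ a (n - 1)) < ⊤ :=
  (abscissaOfAbsConv_le_of_le_const ⟨‖a‖, fun _ _ ↦ lp.norm_apply_le_norm two_ne_zero a _⟩).trans_lt
    (EReal.coe_lt_top 1)

theorem tendsto_dirichletFun_of_tendsto_re_atTop (a : DirichletH) {α : Type*} {l : Filter α}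
    {w : α → ℂ} (hw : Tendsto (fun t ↦ (w t).re) l atTop) :
    Tendsto (fun t ↦ dirichletFun a (w t)) l (𝓝 (a 0)) := by
  simpa only [dirichletFun_eq_LSeries, Nat.sub_self] using
    LSeries.tendsto_of_tendsto_re_atTop (abscissaOfAbsConv_dirichletH_lt_top a) hw

theorem apply_zero_eq_of_dirichletFun_comp (φ : ℂ → ℂ) (T : DirichletH →L[ℂ] DirichletH)
    (hT : ∀ (a : DirichletH) (s : ℂ), 1 / 2 < s.re → dirichletFun (T a) s = dirichletFun a (φ s))
    (hφ : Tendsto (fun x : ℝ ↦ (φ x).re) atTop atTop) (a : DirichletH) : T a 0 = a 0 := by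
  refine tendsto_nhds_unique (tendsto_dirichletFun_of_tendsto_re_atTop (T a) (w := ((↑) : ℝ → ℂ))
    (by simp only [ofReal_re]; exact tendsto_id)) ?_
  refine (tendsto_dirichletFun_of_tendsto_re_atTop a hφ).congr' ?_
  filter_upwards [eventually_gt_atTop (1 / 2)] with x hx
  exact (hT a x (by simpa using hx)).symm

theorem memℓp_conj_natCast_add_one_cpow_neg {s : ℂ} (hs : 1 / 2 < s.re) :
    Memℓp (fun n : ℕ ↦ conj (((n : ℂ) + 1) ^ (-s))) 2 := by
  refine memℓp_gen (((Real.summable_one_div_nat_add_rpow 1 (2 * s.re)).mpr (by linarith)).congr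
    fun n ↦ ?_)
  have hn : (0 : ℝ) < n + 1 := by positivity
  rw [ENNReal.toReal_ofNat, RCLike.norm_conj,
    show (n : ℂ) + 1 = ((n + 1 : ℝ) : ℂ) by push_cast; rfl, norm_cpow_eq_rpow_re_of_pos hn,
    abs_of_pos hn, ← Real.rpow_mul hn.le, neg_re, one_div, ← Real.rpow_neg hn.le]
  ring_nf

noncomputable def dirichletKernel {s : ℂ} (hs : 1 / 2 < s.re) : DirichletH :=
  ⟨fun n ↦ conj (((n : ℂ) + 1) ^ (-s)), memℓp_conj_natCast_add_one_cpow_neg hs⟩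

theorem dirichletFun_eq_inner (a : DirichletH) {s : ℂ} (hs : 1 / 2 < s.re) :
    dirichletFun a s = inner ℂ (dirichletKernel hs) a := by
  rw [lp.inner_eq_tsum, dirichletFun]
  refine tsum_congr fun n ↦ ?_
  rw [RCLike.inner_apply]
  change _ = a n * conj (conj (((n : ℂ) + 1) ^ (-s)))
  rw [conj_conj]

theorem dirichletKernel_injective {s₁ s₂ : ℂ} (hs₁ : 1 / 2 < s₁.re) (hs₂ : 1 / 2 < s₂.re)
    (h : dirichletKernel hs₁ = dirichletKernel hs₂) : s₁ = s₂ := by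
  by_contra hne
  obtain ⟨n, hn⟩ := exists_natCast_add_one_cpow_neg_ne hne
  exact hn (by simpa [dirichletKernel] using congrArg (fun a : DirichletH ↦ conj (a n)) h)

theorem not_dense_range_pow_apply_of_eq {φ : ℂ → ℂ} {T : DirichletH →L[ℂ] DirichletH}
    (hT : ∀ (a : DirichletH) (s : ℂ), 1 / 2 < s.re → dirichletFun (T a) s = dirichletFun a (φ s))
    {s₁ s₂ : ℂ} (hs₁ : 1 / 2 < s₁.re) (hs₂ : 1 / 2 < s₂.re) (hne : s₁ ≠ s₂) (hφ : φ s₁ = φ s₂)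
    (f : DirichletH) : ¬ Dense (range fun n : ℕ ↦ (T ^ (n + 1)) f) := by
  refine not_dense_range_pow_apply_of_apply_eq_mul
    (L := innerSL ℂ (dirichletKernel hs₁ - dirichletKernel hs₂)) (c := 0) ?_ (by simp)
    (fun a ↦ by simp [← dirichletFun_eq_inner, hT a _ hs₁, hT a _ hs₂, hφ]) f
  rw [Ne, ← norm_eq_zero, innerSL_apply_norm, norm_eq_zero, sub_eq_zero]
  exact fun h ↦ hne (dirichletKernel_injective hs₁ hs₂ h)

theorem not_dense_range_pow_apply_of_tendsto_re {φ : ℂ → ℂ} {T : DirichletH →L[ℂ] DirichletH}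
    (hT : ∀ (a : DirichletH) (s : ℂ), 1 / 2 < s.re → dirichletFun (T a) s = dirichletFun a (φ s))
    (hφ : Tendsto (fun x : ℝ ↦ (φ x).re) atTop atTop) (f : DirichletH) :
    ¬ Dense (range fun n : ℕ ↦ (T ^ (n + 1)) f) := by
  refine not_dense_range_pow_apply_of_apply_eq_mul (L := lp.evalCLM ℂ _ 2 0) (c := 1) ?_ (by simp)
    (fun a ↦ (apply_zero_eq_of_dirichletFun_comp φ T hT hφ a).trans (one_mul _).symm) f
  intro h
  have := DFunLike.congr_fun h (lp.single (E := fun _ : ℕ ↦ ℂ) 2 0 1)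
  change lp.single (E := fun _ : ℕ ↦ ℂ) 2 0 1 0 = 0 at this
  simp at this

theorem exists_ne_eq_of_eq_LSeries {φ : ℂ → ℂ} (hφ_maps : ∀ s : ℂ, 1 / 2 < s.re → 1 / 2 < (φ s).re)
    {g : ℕ → ℂ} (hφ : ∀ s : ℂ, 1 / 2 < s.re → φ s = LSeries g s) :
    ∃ s₁ s₂ : ℂ, 1 / 2 < s₁.re ∧ 1 / 2 < s₂.re ∧ s₁ ≠ s₂ ∧ φ s₁ = φ s₂ := by
  have hsum : LSeriesSummable g (1 : ℝ) := by
    by_contra h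
    -- a divergent `tsum` takes the junk value `0`, which is not in the half-plane
    have := hφ_maps 1 (by norm_num)
    rw [hφ 1 (by norm_num), ← ofReal_one, LSeries.eq_zero_of_not_LSeriesSummable _ _ h] at this
    norm_num at this
  obtain ⟨s₁, hs₁, s₂, hs₂, heq, hne⟩ : ∃ s₁, 1 < s₁.re ∧ ∃ s₂, 1 < s₂.re ∧
      LSeries g s₁ = LSeries g s₂ ∧ s₁ ≠ s₂ := by
    simpa [InjOn] using hsum.not_injOn_LSeries
  refine ⟨s₁, s₂, by linarith, by linarith, hne, ?_⟩
  rw [hφ s₁ (by linarith), hφ s₂ (by linarith), heq]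

/-- no hypercyclic composition operator on `𝓗`.
Let `φ` map the half-plane `ℂ_{1/2}` into itself and suppose the composition operator
`C_φ(f) = f ∘ φ` maps `𝓗` boundedly into itself; by the Gordon–Hedenmalm theorem, `φ` has
the form `φ(s) = c₀ s + ψ(s)` with `c₀` a nonnegative integer and `ψ` a Dirichlet series.
Then `C_φ` is not hypercyclic on `𝓗`: no `f ∈ 𝓗` has dense orbit `{C_φⁿ f : n ≥ 1}`. -/
theorem no_hypercyclic_composition_on_dirichlet_space
    (φ : ℂ → ℂ)
    (hφ_maps : ∀ s : ℂ, 1 / 2 < s.re → 1 / 2 < (φ s).re)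
    (Cφ : DirichletH →L[ℂ] DirichletH)
    (hCφ : ∀ (a : DirichletH) (s : ℂ), 1 / 2 < s.re →
      dirichletFun (Cφ a) s = dirichletFun a (φ s))
    (hφ_form : ∃ (c₀ : ℕ) (b : ℕ → ℂ), ∀ s : ℂ, 1 / 2 < s.re →
      φ s = (c₀ : ℂ) * s + ∑' n : ℕ, b n * ((n : ℂ) + 1) ^ (-s)) :
    ¬ ∃ f : DirichletH, Dense (Set.range fun n : ℕ => (Cφ ^ (n + 1)) f) := by
  rintro ⟨f, hf⟩
  obtain ⟨c₀, b, hφ⟩ := hφ_form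
  simp only [tsum_mul_natCast_add_one_cpow_neg] at hφ
  rcases eq_or_ne c₀ 0 with rfl | hc₀
  · obtain ⟨s₁, s₂, hs₁, hs₂, hne, hφeq⟩ := exists_ne_eq_of_eq_LSeries hφ_maps (by simpa using hφ)
    exact not_dense_range_pow_apply_of_eq hCφ hs₁ hs₂ hne hφeq f hf
  · refine not_dense_range_pow_apply_of_tendsto_re hCφ ?_ f hf
    refine (tendsto_re_natCast_mul_add_LSeries_atTop hc₀ (fun n ↦ b (n - 1))).congr' ?_
    filter_upwards [eventually_gt_atTop (1 / 2)] with x hx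
    rw [hφ x (by simpa using hx)]
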